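/- If a partition satisfies conditions (i)–(iii) (only multiples of 6 repeated; b_i − b_{i+2} ≥ 6 with strict inequality if b_i ≡ 0 mod 6; and the multiplicity conditions f_{6j+3}=0, f_{6j+2}+f_{6j+4}≤1, f_{6j+5}+f_{6j+7}≤1, f_{6j-1}+f_{6j}+f_{6j+6}+f_{6j+7}≤3), then for each i ≥ 0 the multiset of its parts lying in the interval [6i+1, 6i+6] is one of exactly the following 16 possibilities: ∅, {6i+1}, {6i+2}, {6i+2, 6i+1}, {6i+4}, {6i+4, 6i+1}, {6i+5}, {6i+5, 6i+1}, {6i+5, 6i+2}, {6i+5, 6i+4}, {6i+6}, {6i+6, 6i+1}, {6i+6, 6i+2}, {6i+6, 6i+4}, {6i+6, 6i+5}, {6i+6, 6i+6}. -/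

import Mathlib

/-- The condition defining type-B partitions (conditions (i)–(iii)), on the
weakly decreasing list of parts. -/
def BCond (l : List ℕ) : Prop :=
  l.Pairwise (· ≥ ·) ∧ (∀ x ∈ l, 0 < x) ∧
  (∀ x : ℕ, ¬ (6 ∣ x) → l.count x ≤ 1) ∧
  (∀ i : ℕ, ∀ h : i + 2 < l.length,
     l.get ⟨i + 2, h⟩ + 6 ≤ l.get ⟨i, by omega⟩ ∧
     (6 ∣ l.get ⟨i, by omega⟩ → l.get ⟨i + 2, h⟩ + 6 < l.get ⟨i, by omega⟩)) ∧
  (∀ j : ℕ, l.count (6 * j + 3) = 0) ∧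
  (∀ j : ℕ, l.count (6 * j + 2) + l.count (6 * j + 4) ≤ 1) ∧
  (∀ j : ℕ, l.count (6 * j + 5) + l.count (6 * j + 7) ≤ 1) ∧
  (∀ j : ℕ, 1 ≤ j →
    l.count (6 * j - 1) + l.count (6 * j) + l.count (6 * j + 6) + l.count (6 * j + 7) ≤ 3)

/-- Number of parts ≡ 0, 1 or 2 (mod 6). -/
def muCount (l : List ℕ) : ℕ := l.countP (fun x => x % 6 == 0 || x % 6 == 1 || x % 6 == 2)

/-- Number of parts ≡ 0, 4 or 5 (mod 6). -/
def nuCount (l : List ℕ) : ℕ := l.countP (fun x => x % 6 == 0 || x % 6 == 4 || x % 6 == 5)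

/-- The 16 configurations of Table 1, as multisets of parts in `[6n+1, 6n+6]`. -/
def cfg (n k : ℕ) : Multiset ℕ :=
  match k with
  | 0 => 0
  | 1 => {6 * n + 1}
  | 2 => {6 * n + 2}
  | 3 => {6 * n + 2, 6 * n + 1}
  | 4 => {6 * n + 4}
  | 5 => {6 * n + 4, 6 * n + 1}
  | 6 => {6 * n + 5}
  | 7 => {6 * n + 5, 6 * n + 1}
  | 8 => {6 * n + 5, 6 * n + 2}
  | 9 => {6 * n + 5, 6 * n + 4}
  | 10 => {6 * n + 6}
  | 11 => {6 * n + 6, 6 * n + 1}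
  | 12 => {6 * n + 6, 6 * n + 2}
  | 13 => {6 * n + 6, 6 * n + 4}
  | 14 => {6 * n + 6, 6 * n + 5}
  | _ => {6 * n + 6, 6 * n + 6}

/-- `BnCount n j μ ν N` = number of type-B partitions of `N` with all parts `≤ 6n+6`,
top-interval configuration of number `≤ j`, `μ` parts ≡ 0,1,2 (mod 6) and
`ν` parts ≡ 0,4,5 (mod 6). -/
noncomputable def BnCount (n j μ ν N : ℕ) : ℕ :=
  Set.ncard {l : List ℕ | BCond l ∧ (∀ x ∈ l, x ≤ 6 * n + 6) ∧
    (∃ k ≤ j, Multiset.filter (fun x => 6 * n + 1 ≤ x ∧ x ≤ 6 * n + 6) ↑l = cfg n k) ∧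
    muCount l = μ ∧ nuCount l = ν ∧ l.sum = N}

/-- The ambient ring: power series in `a`, `b` with coefficients Laurent
(Hahn) series in `q` over `ℤ`. -/
abbrev GFRing : Type := MvPowerSeries (Fin 2) (HahnSeries ℤ ℤ)

/-- A Hahn series in `q` from a coefficient function supported on `ℕ`. -/
noncomputable def hsOf (f : ℕ → ℤ) : HahnSeries ℤ ℤ where
  coeff z := if h : 0 ≤ z then f z.toNat else 0
  isPWO_support' := by
    apply Set.IsWF.isPWO
    apply BddBelow.wellFoundedOn_lt
    refine ⟨0, fun z hz => ?_⟩
    by_contra h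
    exact hz (dif_neg h)

/-- Build an element of `GFRing` from coefficients. -/
noncomputable def gfOf (c : ℕ → ℕ → ℕ → ℤ) : GFRing :=
  fun d => hsOf (fun N => c (d 0) (d 1) N)

noncomputable def qpow (z : ℤ) : GFRing := MvPowerSeries.C (σ := Fin 2) (R := HahnSeries ℤ ℤ) (HahnSeries.single z 1)

noncomputable def av : GFRing := MvPowerSeries.X 0
noncomputable def bv : GFRing := MvPowerSeries.X 1

/-- The generating function `S_n(j,a,b,q)` of Definition 3. -/
noncomputable def S (n : ℤ) (j : ℕ) : GFRing :=
  if n < -1 then 0 else if n = -1 then 1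
  else gfOf (fun μ ν N => (BnCount n.toNat j μ ν N : ℤ))

/-- The generating function `S_n(j, aq^6, bq^6, q)`. -/
noncomputable def Ssub (n : ℤ) (j : ℕ) : GFRing :=
  if n < -1 then 0 else if n = -1 then 1
  else gfOf (fun μ ν N =>
    if 6 * μ + 6 * ν ≤ N then (BnCount n.toNat j μ ν (N - 6 * μ - 6 * ν) : ℤ) else 0)

/-!
By the gap condition `b_k ≥ b_{k+2} + 6`, at most two parts lie in an interval of six consecutive
integers. Together with condition (i), `f_{6j+3} = 0` and `f_{6j+2} + f_{6j+4} ≤ 1`, the parts in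
`[6i+1, 6i+6]` therefore form a sub-multiset of `{6i+1, 6i+2, 6i+4, 6i+5, 6i+6, 6i+6}` with at
most two elements, not containing both `6i+2` and `6i+4`. Shifted down by `6i`, these are among the
64 sub-multisets of `{1, 2, 4, 5, 6, 6}`, which are compared with the table by evaluation.
-/

section GapCondition

variable {l : List ℕ} {d : ℕ}

theorem List.Pairwise.getElem_add_le_of_gap (hsort : l.Pairwise (· ≥ ·))
    (hgap : ∀ k (h : k + 2 < l.length), l[k + 2] + d ≤ l[k])
    {m n : ℕ} (hmn : m + 2 ≤ n) (hn : n < l.length) : l[n] + d ≤ l[m] :=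
  calc l[n] + d ≤ l[m + 2] + d := by
        gcongr
        simpa using hsort.rel_get_of_le (a := ⟨m + 2, by omega⟩) (b := ⟨n, hn⟩) hmn
    _ ≤ l[m] := hgap m (by omega)

theorem List.Sublist.getElem_two_add_le_of_gap {s : List ℕ} (hsub : s.Sublist l)
    (hsort : l.Pairwise (· ≥ ·)) (hgap : ∀ k (h : k + 2 < l.length), l[k + 2] + d ≤ l[k])
    (hs : 2 < s.length) : s[2] + d ≤ s[0] := by
  obtain ⟨f, hf⟩ := List.sublist_iff_exists_fin_orderEmbedding_get_eq.mp hsub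
  have h01 : (f ⟨0, by omega⟩ : ℕ) < f ⟨1, by omega⟩ := f.strictMono (by simp [Fin.lt_def])
  have h12 : (f ⟨1, by omega⟩ : ℕ) < f ⟨2, hs⟩ := f.strictMono (by simp [Fin.lt_def])
  have h0 := hf ⟨0, by omega⟩
  have h2 := hf ⟨2, hs⟩
  simp only [List.get_eq_getElem] at h0 h2
  rw [h0, h2]
  exact hsort.getElem_add_le_of_gap hgap (by omega) _

theorem card_filter_le_two_of_gap (hsort : l.Pairwise (· ≥ ·))
    (hgap : ∀ k (h : k + 2 < l.length), l[k + 2] + d ≤ l[k]) {a b : ℕ} (hab : b < a + d) :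
    Multiset.card (Multiset.filter (fun x => a ≤ x ∧ x ≤ b) (l : Multiset ℕ)) ≤ 2 := by
  rw [Multiset.filter_coe, Multiset.coe_card]
  by_contra! hlen
  have hmem : ∀ (j : ℕ) (hj : j < (l.filter (fun x => a ≤ x ∧ x ≤ b)).length),
      a ≤ (l.filter (fun x => a ≤ x ∧ x ≤ b))[j] ∧ (l.filter (fun x => a ≤ x ∧ x ≤ b))[j] ≤ b :=
    fun j hj => by simpa using List.of_mem_filter (List.getElem_mem hj)
  have hspread := (List.filter_sublist (l := l)).getElem_two_add_le_of_gap hsort hgap hlen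
  have hfirst := hmem 0 (by omega)
  have hthird := hmem 2 hlen
  omega

end GapCondition

theorem count_filter_of_mem_Icc (l : List ℕ) {a b x : ℕ} (hax : a ≤ x) (hxb : x ≤ b) :
    Multiset.count x (Multiset.filter (fun y => a ≤ y ∧ y ≤ b) (l : Multiset ℕ)) = l.count x := by
  rw [Multiset.count_filter_of_pos ⟨hax, hxb⟩, Multiset.coe_count]

theorem filter_le_table {l : List ℕ} {n : ℕ} (hrep : ∀ x : ℕ, ¬ (6 ∣ x) → l.count x ≤ 1)
    (h3 : l.count (6 * n + 3) = 0)
    (hcard : Multiset.card (Multiset.filter (fun x => 6 * n + 1 ≤ x ∧ x ≤ 6 * n + 6) ↑l) ≤ 2) :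
    Multiset.filter (fun x => 6 * n + 1 ≤ x ∧ x ≤ 6 * n + 6) ↑l ≤
      {6 * n + 1, 6 * n + 2, 6 * n + 4, 6 * n + 5, 6 * n + 6, 6 * n + 6} := by
  rw [Multiset.le_iff_count]
  intro a
  by_cases ha : 6 * n + 1 ≤ a ∧ a ≤ 6 * n + 6
  · obtain ⟨r, rfl, hr1, hr6⟩ : ∃ r, a = 6 * n + r ∧ 1 ≤ r ∧ r ≤ 6 :=
      ⟨a - 6 * n, by omega, by omega, by omega⟩
    have hle2 := (Multiset.count_le_card (6 * n + r) _).trans hcard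
    rw [count_filter_of_mem_Icc l ha.1 ha.2] at hle2 ⊢
    interval_cases r
    · simpa using hrep _ (by omega)
    · simpa using hrep _ (by omega)
    · simpa using h3
    · simpa using hrep _ (by omega)
    · simpa using hrep _ (by omega)
    · simpa using hle2
  · have hnot : a ∉ Multiset.filter (fun x => 6 * n + 1 ≤ x ∧ x ≤ 6 * n + 6) ↑l :=
      fun h => ha (Multiset.mem_filter.mp h).2
    rw [Multiset.count_eq_zero.mpr hnot]
    exact Nat.zero_le _

theorem cfg_eq_map (n k : ℕ) : cfg n k = (cfg 0 k).map (6 * n + ·) := by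
  rcases k with _ | _ | _ | _ | _ | _ | _ | _ | _ | _ | _ | _ | _ | _ | _ | k <;> simp [cfg]

theorem exists_cfg_of_le_table {n : ℕ} {M : Multiset ℕ}
    (hM : M ≤ {6 * n + 1, 6 * n + 2, 6 * n + 4, 6 * n + 5, 6 * n + 6, 6 * n + 6})
    (hcard : Multiset.card M ≤ 2) (h24 : ¬ (6 * n + 2 ∈ M ∧ 6 * n + 4 ∈ M)) :
    ∃ k < 16, M = cfg n k := by
  set N := M.map (· - 6 * n)
  have hN : N ≤ {1, 2, 4, 5, 6, 6} := by simpa using Multiset.map_le_map (f := (· - 6 * n)) hM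
  have hMN : M = N.map (6 * n + ·) := by
    rw [Multiset.map_map]
    refine (Multiset.map_congr rfl fun x hx => ?_).trans (Multiset.map_id' M) |>.symm
    have hxT := Multiset.mem_of_le hM hx
    simp only [Multiset.insert_eq_cons, Multiset.mem_cons, Multiset.mem_singleton] at hxT
    simp only [Function.comp_apply]
    omega
  have table : ∀ N ∈ Multiset.powerset ({1, 2, 4, 5, 6, 6} : Multiset ℕ),
      Multiset.card N ≤ 2 → ¬ (2 ∈ N ∧ 4 ∈ N) → ∃ k < 16, N = cfg 0 k := by decide
  obtain ⟨k, hk, hNk⟩ := table N (Multiset.mem_powerset.mpr hN) (by simpa [N] using hcard)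
    (by simpa [hMN] using h24)
  exact ⟨k, hk, by rw [hMN, hNk, ← cfg_eq_map]⟩

/-- For any partition satisfying conditions (i)–(iii), the multiset of parts
lying in the interval `[6i+1, 6i+6]` is one of the 16 configurations of Table 1. -/
theorem parts_in_interval_mem_configs (l : List ℕ) (hl : BCond l) (i : ℕ) :
    ∃ k < 16, Multiset.filter (fun x => 6 * i + 1 ≤ x ∧ x ≤ 6 * i + 6) ↑l = cfg i k := by
  obtain ⟨hsort, -, hrep, hgap, h3, h24, -, -⟩ := hl
  have hcard := card_filter_le_two_of_gap hsort (fun k hk => by simpa using (hgap k hk).1)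
    (show 6 * i + 6 < 6 * i + 1 + 6 by omega)
  refine exists_cfg_of_le_table (filter_le_table hrep (h3 i) hcard) hcard ?_
  rintro ⟨h2, h4⟩
  rw [← Multiset.count_pos, count_filter_of_mem_Icc l (by omega) (by omega)] at h2 h4
  have := h24 i
  omega
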